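/- arXiv:1904.12841 — 5 statements merged into one kernel-verified Lean document; each statement's English description precedes it below -/
import Mathlib

section
/- Let f : A → B be a homomorphism of commutative rings such that for every b ∈ B there exists a natural number ℓ ≥ 1 with b^ℓ ∈ im(f) (i.e. f is an N-epimorphism). Then the induced map Spec(B) → Spec(A), sending a prime q to f⁻¹(q), is injective. -/
theorem Ideal.le_of_comap_le_of_pow_mem_range {A B : Type*} [CommRing A] [CommRing B]
    (f : A →+* B) (hf : ∀ b : B, ∃ ℓ : ℕ, 1 ≤ ℓ ∧ b ^ ℓ ∈ f.range)
    {I J : Ideal B} (hJ : J.IsRadical) (h : I.comap f ≤ J.comap f) : I ≤ J := by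
  intro b hb
  obtain ⟨ℓ, hℓ, a, ha⟩ := hf b
  have ha_mem : a ∈ I.comap f := by
    rw [Ideal.mem_comap, ha]
    exact I.pow_mem_of_mem hb ℓ hℓ
  have hb_pow : b ^ ℓ ∈ J := ha ▸ h ha_mem
  exact hJ ⟨ℓ, hb_pow⟩

theorem comap_injective_of_N_epimorphism
    {A B : Type*} [CommRing A] [CommRing B] (f : A →+* B)
    (hf : ∀ b : B, ∃ ℓ : ℕ, 1 ≤ ℓ ∧ b ^ ℓ ∈ f.range) :
    Function.Injective (PrimeSpectrum.comap f) := by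
  intro p q h
  have hpq := congrArg PrimeSpectrum.asIdeal h
  ext1
  exact le_antisymm
    (Ideal.le_of_comap_le_of_pow_mem_range f hf q.isPrime.isRadical hpq.le)
    (Ideal.le_of_comap_le_of_pow_mem_range f hf p.isPrime.isRadical hpq.ge)
end

section
/- Let f : A → B be a homomorphism of commutative rings whose kernel consists of nilpotent elements and such that every element of B has some positive power in the image of f (i.e. f is an F-isomorphism). Then the induced map Spec(B) → Spec(A) on prime spectra is a bijection. -/
/-!
Every `b : B` is a root of the monic polynomial `X ^ n - f a` with `b ^ n = f a`, so `f` is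
integral and lying over makes `Spec f` surjective; a nilpotent kernel lies in every prime, so no
prime is missed. For injectivity, a radical ideal `Q` of `B` contains `b` as soon as it contains
`b ^ n = f a`, i.e. as soon as `a ∈ f⁻¹ Q`; hence `Q` is recovered from `f⁻¹ Q`.
-/

section

variable {A B : Type*} [CommRing A] [CommRing B] {f : A →+* B}

namespace RingHom

theorem isIntegral_of_forall_pow_mem_range (hpow : ∀ b : B, ∃ n : ℕ, 1 ≤ n ∧ b ^ n ∈ f.range) :
    f.IsIntegral := by
  intro b
  obtain ⟨n, hn, a, ha⟩ := hpow b
  refine ⟨Polynomial.X ^ n - Polynomial.C a, Polynomial.monic_X_pow_sub_C a (by omega), ?_⟩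
  simp [ha]

theorem IsIntegral.comap_surjective_of_ker_le_nilradical (hf : f.IsIntegral)
    (hker : RingHom.ker f ≤ nilradical A) : Function.Surjective (PrimeSpectrum.comap f) := by
  intro p
  algebraize [f]
  have hbot : (⊥ : Ideal B).comap (algebraMap A B) ≤ p.asIdeal := by
    rw [← RingHom.ker_eq_comap_bot]
    exact hker.trans (nilradical_le_prime p.asIdeal)
  obtain ⟨Q, -, hQ, hQp⟩ := Ideal.exists_ideal_over_prime_of_isIntegral p.asIdeal ⊥ hbot
  exact ⟨⟨Q, hQ⟩, PrimeSpectrum.ext hQp⟩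

end RingHom

theorem Ideal.le_of_comap_le_comap_of_forall_pow_mem_range
    (hpow : ∀ b : B, ∃ n : ℕ, 1 ≤ n ∧ b ^ n ∈ f.range)
    {I Q : Ideal B} (hQ : Q.IsRadical) (h : I.comap f ≤ Q.comap f) : I ≤ Q := by
  intro b hb
  obtain ⟨n, hn, a, ha⟩ := hpow b
  have hbn : f a ∈ I := ha ▸ I.pow_mem_of_mem hb n (by omega)
  exact hQ ⟨n, ha ▸ h hbn⟩

theorem PrimeSpectrum.comap_injective_of_forall_pow_mem_range
    (hpow : ∀ b : B, ∃ n : ℕ, 1 ≤ n ∧ b ^ n ∈ f.range) :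
    Function.Injective (PrimeSpectrum.comap f) := by
  intro p q h
  have hpq := congrArg PrimeSpectrum.asIdeal h
  exact PrimeSpectrum.ext <| le_antisymm
    (Ideal.le_of_comap_le_comap_of_forall_pow_mem_range hpow q.isPrime.isRadical hpq.le)
    (Ideal.le_of_comap_le_comap_of_forall_pow_mem_range hpow p.isPrime.isRadical hpq.ge)

end

theorem comap_bijective_of_F_isomorphism
    {A B : Type*} [CommRing A] [CommRing B] (f : A →+* B)
    (hker : ∀ a : A, f a = 0 → IsNilpotent a)
    (hpow : ∀ b : B, ∃ n : ℕ, 1 ≤ n ∧ b ^ n ∈ f.range) :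
    Function.Bijective (PrimeSpectrum.comap f) :=
  ⟨PrimeSpectrum.comap_injective_of_forall_pow_mem_range hpow,
    (RingHom.isIntegral_of_forall_pow_mem_range hpow).comap_surjective_of_ker_le_nilradical
      fun a ha => hker a ha⟩
end

section
/- Let f : A → B be a homomorphism of commutative rings such that the induced map Spec(B) → Spec(A) is surjective. Then for every finitely generated A-module M, if B ⊗_A M = 0 then M = 0. -/
/-!
A prime `q` of `B` over `p` of `A` lies in the support of `B ⊗[A] M` exactly when the fibre
`κ(q) ⊗[A] M` is nonzero, and for finite `M` that happens exactly when `p` lies in the support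
of `M`: by Nakayama, `p ∈ Supp M` iff `κ(p) ⊗[A] M ≠ 0`, and `κ(q)` is faithfully flat over
the field `κ(p)`. Hence `Supp (B ⊗[A] M)` is the preimage of `Supp M`, and if `B ⊗[A] M = 0`
then `Supp M` misses the image of `Spec B`, which is all of `Spec A`.
-/

open TensorProduct

lemma Module.comap_mem_support_iff_nontrivial_residueField_tensorProduct
    {A B : Type*} [CommRing A] [CommRing B] [Algebra A B]
    (M : Type*) [AddCommGroup M] [Module A M] [Module.Finite A M] (q : PrimeSpectrum B) :
    PrimeSpectrum.comap (algebraMap A B) q ∈ Module.support A M ↔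
      Nontrivial (q.asIdeal.ResidueField ⊗[A] M) := by
  set p := PrimeSpectrum.comap (algebraMap A B) q
  let _ : Algebra p.asIdeal.ResidueField q.asIdeal.ResidueField :=
    (Ideal.ResidueField.map p.asIdeal q.asIdeal (algebraMap A B) rfl).toAlgebra
  have _ : IsScalarTower A p.asIdeal.ResidueField q.asIdeal.ResidueField :=
    .of_algebraMap_eq fun a =>
      (Ideal.ResidueField.map_algebraMap p.asIdeal q.asIdeal (algebraMap A B) rfl a).symm
  rw [Module.mem_support_iff_nontrivial_residueField_tensorProduct,
    (AlgebraTensorModule.cancelBaseChange A p.asIdeal.ResidueField q.asIdeal.ResidueField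
      q.asIdeal.ResidueField M).symm.nontrivial_congr,
    Module.FaithfullyFlat.nontrivial_tensorProduct_iff_right p.asIdeal.ResidueField]

lemma Module.support_baseChange
    {A B : Type*} [CommRing A] [CommRing B] [Algebra A B]
    (M : Type*) [AddCommGroup M] [Module A M] [Module.Finite A M] :
    Module.support B (B ⊗[A] M) =
      PrimeSpectrum.comap (algebraMap A B) ⁻¹' Module.support A M := by
  ext q
  rw [Set.mem_preimage, Module.comap_mem_support_iff_nontrivial_residueField_tensorProduct,
    Module.mem_support_iff_nontrivial_residueField_tensorProduct,
    (AlgebraTensorModule.cancelBaseChange A B q.asIdeal.ResidueField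
      q.asIdeal.ResidueField M).nontrivial_congr]

theorem fg_module_trivial_of_comap_surjective
    {A B : Type*} [CommRing A] [CommRing B] [Algebra A B]
    (hsurj : Function.Surjective (PrimeSpectrum.comap (algebraMap A B)))
    (M : Type*) [AddCommGroup M] [Module A M] [Module.Finite A M]
    (h : Subsingleton (B ⊗[A] M)) : Subsingleton M := by
  rw [← Module.support_eq_empty_iff (R := B), Module.support_baseChange, ← Set.preimage_empty,
    hsurj.preimage_injective.eq_iff] at h
  exact Module.support_eq_empty_iff.mp h
end

section
/- Consider a pushout square of commutative rings, i.e. ring homomorphisms i : R → S, f : R → A, and B = A ⊗_R S with the induced maps j : A → B and g : S → B. If the base-change functor A ⊗_R (−) on R-modules is conservative, then the base-change functor B ⊗_S (−) on S-modules is conservative. -/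
open TensorProduct

def Module.BaseChangeConservative (R A : Type) [CommRing R] [CommRing A] [Algebra R A] : Prop :=
  ∀ (M : Type) [AddCommGroup M] [Module R M], Subsingleton (A ⊗[R] M) → Subsingleton M

noncomputable def TensorProduct.pushoutTensorEquiv (R S A N : Type*) [CommSemiring R]
    [CommSemiring S] [Algebra R S] [AddCommMonoid A] [Module R A] [AddCommMonoid N] [Module R N]
    [Module S N] [IsScalarTower R S N] : (S ⊗[R] A) ⊗[S] N ≃ₗ[R] A ⊗[R] N :=
  ((TensorProduct.comm S (S ⊗[R] A) N ≪≫ₗ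
      AlgebraTensorModule.cancelBaseChange R S S N A).restrictScalars R) ≪≫ₗ
    TensorProduct.comm R N A

theorem Module.BaseChangeConservative.pushout {R S A : Type} [CommRing R] [CommRing S]
    [CommRing A] [Algebra R S] [Algebra R A] (hA : BaseChangeConservative R A) :
    BaseChangeConservative S (S ⊗[R] A) := by
  intro N _ _ hN
  let := Module.compHom N (algebraMap R S)
  have : IsScalarTower R S N := .of_algebraMap_smul fun _ _ ↦ rfl
  exact hA N (pushoutTensorEquiv R S A N).symm.toEquiv.subsingleton

theorem pushout_baseChange_conservative
    {R S A : Type} [CommRing R] [CommRing S] [CommRing A]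
    [Algebra R S] [Algebra R A]
    (hcons : ∀ (M : Type) [AddCommGroup M] [Module R M],
      Subsingleton (A ⊗[R] M) → Subsingleton M)
    (N : Type) [AddCommGroup N] [Module S N]
    (h : Subsingleton ((S ⊗[R] A) ⊗[S] N)) : Subsingleton N :=
  Module.BaseChangeConservative.pushout hcons N h
end

section
/- Let k be a field of characteristic p > 0 and let f : A → B be a homomorphism of commutative k-algebras such that for every b ∈ B there is n ≥ 0 with b^(p^n) ∈ im(f). If ker(f) consists of nilpotent elements, then the induced map Spec(B) → Spec(A) is a homeomorphism onto its image, and is bijective. -/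
theorem comap_bijective_isEmbedding_of_char_p_F_isomorphism_general
    {k A B : Type*} [Field k] [CommRing A] [CommRing B]
    [Algebra k A] [Algebra k B] (p : ℕ) [Fact p.Prime]
    (f : A →ₐ[k] B)
    (hpow : ∀ b : B, ∃ n : ℕ, b ^ p ^ n ∈ f.toRingHom.range)
    (hker : ∀ a : A, f a = 0 → IsNilpotent a) :
    Function.Bijective (PrimeSpectrum.comap f.toRingHom) ∧
    Topology.IsEmbedding (PrimeSpectrum.comap f.toRingHom) := by
  have hpos : ∀ b : B, ∃ m > 0, b ^ m ∈ f.toRingHom.range := fun b ↦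
    let ⟨n, hn⟩ := hpow b
    ⟨p ^ n, pow_pos (Fact.out : p.Prime).pos n, hn⟩
  have hnil : RingHom.ker f.toRingHom ≤ nilradical A := fun a ha ↦ hker a ha
  have hhomeo := PrimeSpectrum.isHomeomorph_comap f.toRingHom hpos hnil
  exact ⟨hhomeo.bijective, hhomeo.isEmbedding⟩

theorem comap_bijective_isEmbedding_of_char_p_F_isomorphism
    {k A B : Type*} [Field k] [CommRing A] [CommRing B]
    [Algebra k A] [Algebra k B] (p : ℕ) [Fact p.Prime] [CharP k p]
    (f : A →ₐ[k] B)
    (hpow : ∀ b : B, ∃ n : ℕ, b ^ p ^ n ∈ f.toRingHom.range)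
    (hker : ∀ a : A, f a = 0 → IsNilpotent a) :
    Function.Bijective (PrimeSpectrum.comap f.toRingHom) ∧
    Topology.IsEmbedding (PrimeSpectrum.comap f.toRingHom) :=
  comap_bijective_isEmbedding_of_char_p_F_isomorphism_general p f hpow hker
end
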